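/- For n, N positive integers and Re(s) > 1, the sum over positive integers q divisible by 4N of r(n;q)/q^{2s}, where r(n;q) is the Ramanujan sum, equals σ_{1-2s}(n;4N)/ζ^{(4N)}(2s) when n ≠ 0, where ζ^{(4N)}(s) = ζ(s)·∏_{p|4N}(1-p^{-s}) and σ_s(n;4N) is the modified divisor sum defined below. -/

import Mathlib

open scoped Real BigOperators

noncomputable def ramanujanSum (n q : ℕ) : ℂ :=
  ∑ a ∈ (Finset.range q).filter (fun a => Nat.gcd a q = 1),
    Complex.exp (2 * Real.pi * Complex.I * a * n / q)

namespace RS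
open ArithmeticFunction Finset

lemma sum_exp (n t : ℕ) (ht : t ≠ 0) :
    ∑ b ∈ Finset.range t, Complex.exp (2 * Real.pi * Complex.I * b * n / t)
      = if t ∣ n then (t : ℂ) else 0 := by
  have htC : (t : ℂ) ≠ 0 := Nat.cast_ne_zero.mpr ht
  by_cases h : t ∣ n
  · rw [if_pos h]
    obtain ⟨c, rfl⟩ := h
    push_cast
    have key : ∀ b ∈ Finset.range t,
        Complex.exp (2 * Real.pi * Complex.I * b * ((t : ℂ) * c) / t) = 1 := by
      intro b _
      have h1 : (2 * Real.pi * Complex.I * b * ((t : ℂ) * c) / t : ℂ)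
          = ((b * c : ℕ) : ℤ) * (2 * Real.pi * Complex.I) := by
        push_cast
        field_simp
      rw [h1, Complex.exp_int_mul_two_pi_mul_I]
    rw [Finset.sum_congr rfl key]
    simp
  · rw [if_neg h]
    set z := Complex.exp (2 * Real.pi * Complex.I * n / t) with hz
    have hzb : ∀ b ∈ Finset.range t,
        Complex.exp (2 * Real.pi * Complex.I * b * n / t) = z ^ b := by
      intro b _
      rw [hz, ← Complex.exp_nat_mul]
      congr 1
      ring
    have hz1 : z ≠ 1 := by
      intro hz1
      obtain ⟨k, hk⟩ := Complex.exp_eq_one_iff.mp hz1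
      have hpi : (2 : ℂ) * Real.pi * Complex.I ≠ 0 := by
        simp [Real.pi_ne_zero, Complex.I_ne_zero]
      have h2 : (n : ℂ) = k * t := by
        have h4 : 2 * (Real.pi : ℂ) * Complex.I * n = 2 * Real.pi * Complex.I * (k * t) := by
          field_simp at hk
          linear_combination (2 * (Real.pi : ℂ) * Complex.I) * hk
        have := mul_left_cancel₀ hpi h4
        exact this
      have h3 : (n : ℤ) = k * t := by exact_mod_cast h2
      exact h ((Int.natCast_dvd_natCast (m := t) (n := n)).mp ⟨k, by rw [h3]; ring⟩)
    have hzt : z ^ t = 1 := by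
      rw [hz, ← Complex.exp_nat_mul]
      have h5 : (t : ℂ) * (2 * Real.pi * Complex.I * n / t)
          = ((n : ℕ) : ℤ) * (2 * Real.pi * Complex.I) := by
        push_cast
        field_simp
      rw [h5, Complex.exp_int_mul_two_pi_mul_I]
    rw [Finset.sum_congr rfl hzb, geom_sum_eq hz1, hzt]
    simp

lemma sum_moebius (k : ℕ) : (∑ d ∈ k.divisors, ((moebius d : ℤ) : ℂ)) = if k = 1 then 1 else 0 := by
  have h := congrArg (fun f : ArithmeticFunction ℤ => f k) moebius_mul_coe_zeta
  simp only [coe_mul_zeta_apply, one_apply] at h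
  have h' : ((∑ d ∈ k.divisors, moebius d : ℤ) : ℂ) = ((if k = 1 then 1 else 0 : ℤ) : ℂ) := by
    exact_mod_cast congrArg (fun z : ℤ => (z : ℂ)) h
  simpa [apply_ite (fun z : ℤ => (z : ℂ))] using h'

lemma divisors_gcd (a q : ℕ) (hq : q ≠ 0) :
    (Nat.gcd a q).divisors = q.divisors.filter (· ∣ a) := by
  ext d
  simp only [Nat.mem_divisors, Finset.mem_filter]
  constructor
  · rintro ⟨hd, -⟩
    exact ⟨⟨hd.trans (Nat.gcd_dvd_right a q), hq⟩, hd.trans (Nat.gcd_dvd_left a q)⟩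
  · rintro ⟨⟨hdq, -⟩, hda⟩
    exact ⟨Nat.dvd_gcd hda hdq, fun h0 => hq (Nat.eq_zero_of_gcd_eq_zero_right h0)⟩

lemma ramanujanSum_eq_sum (n q : ℕ) (hq : q ≠ 0) :
    ramanujanSum n q
      = ∑ d ∈ q.divisors, (if d ∣ n then (d : ℂ) else 0) * ((moebius (q / d) : ℤ) : ℂ) := by
  rw [ramanujanSum, Finset.sum_filter]
  have step1 : ∀ a ∈ Finset.range q,
      (if Nat.gcd a q = 1 then Complex.exp (2 * Real.pi * Complex.I * a * n / q) else 0)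
        = ∑ d ∈ q.divisors, (if d ∣ a then ((moebius d : ℤ) : ℂ) * Complex.exp (2 * Real.pi * Complex.I * a * n / q) else 0) := by
    intro a _
    rw [← Finset.sum_filter, ← divisors_gcd a q hq, ← Finset.sum_mul, sum_moebius]
    split <;> simp
  rw [Finset.sum_congr rfl step1, Finset.sum_comm]
  have step2 : ∀ d ∈ q.divisors,
      (∑ a ∈ Finset.range q, if d ∣ a then ((moebius d : ℤ) : ℂ) * Complex.exp (2 * Real.pi * Complex.I * a * n / q) else 0)
        = ((moebius d : ℤ) : ℂ) * (if (q / d) ∣ n then ((q / d : ℕ) : ℂ) else 0) := by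
    intro d hd
    obtain ⟨hdq, -⟩ := Nat.mem_divisors.mp hd
    obtain ⟨t, rfl⟩ := hdq
    have hd0 : d ≠ 0 := by rintro rfl; simp at hq
    have ht0 : t ≠ 0 := by rintro rfl; simp at hq
    have hd0' : 0 < d := Nat.pos_of_ne_zero hd0
    have hqd : (d * t) / d = t := by
      rw [Nat.mul_div_cancel_left _ hd0']
    rw [hqd, ← Finset.sum_filter]
    have himg : (Finset.range (d * t)).filter (d ∣ ·) = (Finset.range t).image (fun b => d * b) := by
      ext a
      simp only [Finset.mem_filter, Finset.mem_range, Finset.mem_image]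
      constructor
      · rintro ⟨ha, b, rfl⟩
        exact ⟨b, (mul_lt_mul_iff_right₀ hd0').mp ha, rfl⟩
      · rintro ⟨b, hb, rfl⟩
        exact ⟨(mul_lt_mul_iff_right₀ hd0').mpr hb, ⟨b, rfl⟩⟩
    rw [himg, Finset.sum_image (fun x _ y _ h => by
      exact (mul_right_injective₀ hd0) h)]
    have hterm : ∀ b ∈ Finset.range t,
        ((moebius d : ℤ) : ℂ) * Complex.exp (2 * Real.pi * Complex.I * ((d * b : ℕ) : ℂ) * n / ((d * t : ℕ) : ℂ))
          = ((moebius d : ℤ) : ℂ) * Complex.exp (2 * Real.pi * Complex.I * b * n / t) := by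
      intro b _
      congr 2
      have hdC : (d : ℂ) ≠ 0 := Nat.cast_ne_zero.mpr hd0
      have htC : (t : ℂ) ≠ 0 := Nat.cast_ne_zero.mpr ht0
      push_cast
      field_simp
    rw [Finset.sum_congr rfl hterm, ← Finset.mul_sum, sum_exp n t ht0]
  rw [Finset.sum_congr rfl step2]
  have step3 : ∀ d ∈ q.divisors,
      ((moebius d : ℤ) : ℂ) * (if (q / d) ∣ n then ((q / d : ℕ) : ℂ) else 0)
        = (fun e => (if e ∣ n then (e : ℂ) else 0) * ((moebius (q / e) : ℤ) : ℂ)) (q / d) := by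
    intro d hd
    obtain ⟨hdq, -⟩ := Nat.mem_divisors.mp hd
    simp only
    rw [Nat.div_div_self hdq hq]
    ring
  rw [Finset.sum_congr rfl step3]
  exact Nat.sum_div_divisors (α := ℂ) q (fun e => (if e ∣ n then (e : ℂ) else 0) * ((moebius (q / e) : ℤ) : ℂ))


/-- `d ↦ d · [d ∣ n]` as an arithmetic function. -/
def f1 (n : ℕ) : ArithmeticFunction ℂ :=
  ⟨fun d => if d ∣ n ∧ d ≠ 0 then (d : ℂ) else 0, by simp⟩

lemma f1_apply (n d : ℕ) : f1 n d = if d ∣ n ∧ d ≠ 0 then (d : ℂ) else 0 := rfl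

lemma f1_mult (n : ℕ) : (f1 n).IsMultiplicative := by
  refine ⟨by simp [f1_apply], ?_⟩
  intro d e hde
  simp only [f1_apply]
  by_cases hd : d ∣ n ∧ d ≠ 0
  · by_cases he : e ∣ n ∧ e ≠ 0
    · rw [if_pos ⟨hde.mul_dvd_of_dvd_of_dvd hd.1 he.1, mul_ne_zero hd.2 he.2⟩, if_pos hd, if_pos he]
      push_cast; ring
    · rw [if_neg (fun hc => he ⟨(dvd_mul_left e d).trans hc.1, fun h0 => hc.2 (by simp [h0])⟩),
        if_pos hd, if_neg he, mul_zero]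
  · rw [if_neg (fun hc => hd ⟨(dvd_mul_right d e).trans hc.1, fun h0 => hc.2 (by simp [h0])⟩),
      if_neg hd, zero_mul]

/-- The Ramanujan-sum coefficient function `c(q) = Σ_{d ∣ (n,q)} d μ(q/d)`. -/
def cA (n : ℕ) : ArithmeticFunction ℂ := f1 n * ↑ArithmeticFunction.moebius

lemma cA_mult (n : ℕ) : (cA n).IsMultiplicative :=
  (f1_mult n).mul (isMultiplicative_moebius.intCast)

lemma cA_apply (n q : ℕ) (hq : q ≠ 0) :
    cA n q = ∑ d ∈ q.divisors, (if d ∣ n then (d : ℂ) else 0) * ((moebius (q / d) : ℤ) : ℂ) := by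
  rw [cA, mul_apply]
  simp only [intCoe_apply]
  rw [Nat.sum_divisorsAntidiagonal (fun d e => f1 n d * ((moebius e : ℤ) : ℂ))]
  refine Finset.sum_congr rfl (fun d hd => ?_)
  obtain ⟨hdq, -⟩ := Nat.mem_divisors.mp hd
  have hd0 : d ≠ 0 := fun h0 => hq (by simpa [h0] using hdq)
  rw [f1_apply]
  by_cases h : d ∣ n
  · rw [if_pos ⟨h, hd0⟩, if_pos h]
  · rw [if_neg (fun hc => h hc.1), if_neg h]

lemma ramanujanSum_eq_cA (n q : ℕ) (hq : q ≠ 0) : ramanujanSum n q = cA n q := by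
  rw [ramanujanSum_eq_sum n q hq, cA_apply n q hq]

lemma cA_bound (n : ℕ) (hn : n ≠ 0) (q : ℕ) (hq : q ≠ 0) :
    ‖cA n q‖ ≤ (n : ℝ) * n := by
  rw [cA_apply n q hq]
  calc ‖∑ d ∈ q.divisors, (if d ∣ n then (d : ℂ) else 0) * ((moebius (q / d) : ℤ) : ℂ)‖
      ≤ ∑ d ∈ q.divisors, ‖(if d ∣ n then (d : ℂ) else 0) * ((moebius (q / d) : ℤ) : ℂ)‖ := by
        exact norm_sum_le _ _
    _ ≤ ∑ d ∈ q.divisors, (if d ∣ n then (d : ℝ) else 0) := by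
        refine Finset.sum_le_sum (fun d hd => ?_)
        rw [norm_mul]
        by_cases h : d ∣ n
        · rw [if_pos h, if_pos h]
          have h1 : ‖((moebius (q / d) : ℤ) : ℂ)‖ ≤ 1 := by
            rw [Complex.norm_intCast]
            exact_mod_cast abs_moebius_le_one
          calc ‖(d : ℂ)‖ * ‖((moebius (q / d) : ℤ) : ℂ)‖
              ≤ ‖(d : ℂ)‖ * 1 := by
                exact mul_le_mul_of_nonneg_left h1 (norm_nonneg _)
            _ = (d : ℝ) := by rw [mul_one, Complex.norm_natCast]
        · simp [h]
    _ ≤ ∑ d ∈ q.divisors, (if d ∣ n then (n : ℝ) else 0) := by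
        refine Finset.sum_le_sum (fun d hd => ?_)
        by_cases h : d ∣ n
        · simpa [h] using (Nat.cast_le (α := ℝ)).mpr (Nat.le_of_dvd (Nat.pos_of_ne_zero hn) h)
        · simp [h]
    _ = ∑ d ∈ q.divisors.filter (· ∣ n), (n : ℝ) := by rw [Finset.sum_filter]
    _ ≤ (n : ℝ) * n := by
        rw [Finset.sum_const, nsmul_eq_mul]
        have hcard : (q.divisors.filter (· ∣ n)).card ≤ n := by
          have hsub : q.divisors.filter (· ∣ n) ⊆ Finset.Icc 1 n := by
            intro d hd
            obtain ⟨hd1, hd2⟩ := Finset.mem_filter.mp hd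
            exact Finset.mem_Icc.mpr ⟨Nat.pos_of_mem_divisors hd1,
              Nat.le_of_dvd (Nat.pos_of_ne_zero hn) hd2⟩
          calc (q.divisors.filter (· ∣ n)).card ≤ (Finset.Icc 1 n).card := Finset.card_le_card hsub
            _ = n := by rw [Nat.card_Icc]; omega
        have : (0:ℝ) ≤ (n:ℝ) := Nat.cast_nonneg n
        exact mul_le_mul_of_nonneg_right (Nat.cast_le.mpr hcard) this

/-- `c(p^a)` as a sum over `j ≤ a`. -/
lemma cA_pp_sum (n p : ℕ) (hp : p.Prime) (a : ℕ) :
    cA n (p ^ a) = ∑ j ∈ Finset.range (a + 1),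
      (if p ^ j ∣ n then ((p : ℂ)) ^ j else 0) * ((moebius (p ^ (a - j)) : ℤ) : ℂ) := by
  rw [cA_apply n (p ^ a) (pow_ne_zero a hp.ne_zero), Nat.sum_divisors_prime_pow hp]
  refine Finset.sum_congr rfl (fun j hj => ?_)
  have hj' : j ≤ a := by simpa using Nat.lt_succ_iff.mp (Finset.mem_range.mp hj)
  rw [Nat.pow_div hj' hp.pos]
  push_cast
  rfl

lemma cA_prime_pow (n p : ℕ) (hp : p.Prime) (a : ℕ) (ha : a ≠ 0) :
    cA n (p ^ a) = (if p ^ a ∣ n then ((p : ℂ)) ^ a else 0)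
      - (if p ^ (a - 1) ∣ n then ((p : ℂ)) ^ (a - 1) else 0) := by
  obtain ⟨b, rfl⟩ : ∃ b, a = b + 1 := ⟨a - 1, by omega⟩
  rw [cA_pp_sum n p hp]
  rw [Finset.sum_range_succ, Finset.sum_range_succ]
  have hzero : ∀ j ∈ Finset.range b,
      (if p ^ j ∣ n then ((p : ℂ)) ^ j else 0) * ((moebius (p ^ (b + 1 - j)) : ℤ) : ℂ) = 0 := by
    intro j hj
    have hj' : j < b := Finset.mem_range.mp hj
    have h2 : b + 1 - j ≠ 0 := by omega
    rw [moebius_apply_prime_pow hp h2, if_neg (show ¬(b + 1 - j = 1) by omega)]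
    simp
  rw [Finset.sum_congr rfl hzero]
  have h1 : b + 1 - b = 1 := by omega
  have h2 : b + 1 - (b + 1) = 0 := by omega
  rw [h1, h2, pow_one, moebius_apply_prime hp, pow_zero, moebius_apply_one]
  simp only [Nat.add_sub_cancel, Finset.sum_const_zero]
  push_cast
  ring


lemma peel {p : ℕ} (hp : p.Prime) (ℓ h : ArithmeticFunction ℂ)
    (hl : ∀ d, ℓ d ≠ 0 → d = p ^ d.factorization p)
    (hh : ∀ e, h e ≠ 0 → ¬ p ∣ e) {m : ℕ} (hm : m ≠ 0) :
    (ℓ * h) m = ℓ (p ^ m.factorization p) * h (m / p ^ m.factorization p) := by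
  rw [mul_apply]
  have hmem : (p ^ m.factorization p, m / p ^ m.factorization p) ∈ m.divisorsAntidiagonal := by
    rw [Nat.mem_divisorsAntidiagonal]
    exact ⟨Nat.ordProj_mul_ordCompl_eq_self m p, hm⟩
  refine Finset.sum_eq_single_of_mem _ hmem (fun b hb hne => ?_)
  by_contra hterm
  have h1 : ℓ b.1 ≠ 0 := fun h0 => hterm (by rw [h0, zero_mul])
  have h2 : h b.2 ≠ 0 := fun h0 => hterm (by rw [h0, mul_zero])
  obtain ⟨hprod, -⟩ := Nat.mem_divisorsAntidiagonal.mp hb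
  have hb1 : b.1 ≠ 0 := by rintro h0; rw [h0, zero_mul] at hprod; exact hm hprod.symm
  have hb2 : b.2 ≠ 0 := by rintro h0; rw [h0, mul_zero] at hprod; exact hm hprod.symm
  have hA : m.factorization p = b.1.factorization p := by
    rw [← hprod, Nat.factorization_mul hb1 hb2]
    simp [Nat.factorization_eq_zero_of_not_dvd (hh b.2 h2)]
  have hb1' : b.1 = p ^ m.factorization p := by rw [hA]; exact hl b.1 h1
  apply hne
  have hb2' : b.2 = m / p ^ m.factorization p := by
    rw [hb1'] at hprod
    exact (Nat.div_eq_of_eq_mul_right (pow_pos hp.pos _) hprod.symm).symm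
  exact Prod.ext hb1' hb2'

/-- partially-constrained Ramanujan coefficient function -/
def hS (n Q : ℕ) (S : Finset ℕ) : ArithmeticFunction ℂ :=
  ⟨fun m => if (∀ p ∈ S, Q.factorization p ≤ m.factorization p)
      ∧ (∀ p ∈ Q.primeFactors, p ∉ S → ¬ p ∣ m) then cA n m else 0, by
    split
    · exact ArithmeticFunction.map_zero
    · rfl⟩

lemma hS_apply (n Q : ℕ) (S : Finset ℕ) (m : ℕ) :
    hS n Q S m = if (∀ p ∈ S, Q.factorization p ≤ m.factorization p)
      ∧ (∀ p ∈ Q.primeFactors, p ∉ S → ¬ p ∣ m) then cA n m else 0 := rfl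

/-- the local factor at `p`, exponents at least `e` -/
def ellp (n e p : ℕ) : ArithmeticFunction ℂ :=
  ⟨fun m => if e ≤ m.factorization p ∧ m = p ^ m.factorization p then cA n m else 0, by
    split
    · exact ArithmeticFunction.map_zero
    · rfl⟩

lemma ellp_apply (n e p m : ℕ) :
    ellp n e p m = if e ≤ m.factorization p ∧ m = p ^ m.factorization p then cA n m else 0 := rfl

/-- indicator of powers of `p` -/
def geo (p : ℕ) : ArithmeticFunction ℂ :=
  ⟨fun m => if m = p ^ m.factorization p then 1 else 0, by
    rw [Nat.factorization_zero]
    norm_num⟩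

lemma geo_apply (p m : ℕ) : geo p m = if m = p ^ m.factorization p then 1 else 0 := rfl

/-- indicator of numbers with prime factors inside `S` -/
def nuS (S : Finset ℕ) : ArithmeticFunction ℂ :=
  ⟨fun m => if m ≠ 0 ∧ m.primeFactors ⊆ S then 1 else 0, by simp⟩

lemma nuS_apply (S : Finset ℕ) (m : ℕ) :
    nuS S m = if m ≠ 0 ∧ m.primeFactors ⊆ S then 1 else 0 := rfl

/-- the target function: `[Q ∣ m] · c(m)` -/
def gA (n Q : ℕ) : ArithmeticFunction ℂ :=
  ⟨fun m => if Q ∣ m then cA n m else 0, by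
    split
    · exact ArithmeticFunction.map_zero
    · rfl⟩

lemma gA_apply (n Q m : ℕ) : gA n Q m = if Q ∣ m then cA n m else 0 := rfl

section facts
variable {p m : ℕ} (hp : p.Prime) (hm : m ≠ 0)

include hp hm

lemma factorization_ordCompl_eq {q : ℕ} (hq : q ≠ p) :
    (m / p ^ m.factorization p).factorization q = m.factorization q := by
  rw [Nat.factorization_ordCompl]
  exact Finsupp.erase_ne hq

lemma dvd_ordCompl_iff {q : ℕ} (hq : q.Prime) (hqp : q ≠ p) :
    q ∣ m / p ^ m.factorization p ↔ q ∣ m := by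
  constructor
  · intro hd
    exact hd.trans (Nat.ordCompl_dvd m p)
  · intro hd
    have hd' : q ∣ p ^ m.factorization p * (m / p ^ m.factorization p) := by
      rwa [Nat.ordProj_mul_ordCompl_eq_self]
    rcases (Nat.Prime.dvd_mul hq).mp hd' with h | h
    · exact absurd ((Nat.prime_dvd_prime_iff_eq hq hp).mp (hq.dvd_of_dvd_pow h)) hqp
    · exact h

end facts

lemma hS_step (n Q : ℕ) {S : Finset ℕ} {p : ℕ}
    (hpQ : p ∈ Q.primeFactors) (hpS : p ∉ S) :
    hS n Q (insert p S) = ellp n (Q.factorization p) p * hS n Q S := by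
  have hp := Nat.prime_of_mem_primeFactors hpQ
  ext m
  by_cases hm : m = 0
  · rw [hm, ArithmeticFunction.map_zero, ArithmeticFunction.map_zero]
  rw [peel hp _ _ ?hl ?hh hm]
  case hl =>
    intro d hd
    rw [ellp_apply] at hd
    by_cases hc : Q.factorization p ≤ d.factorization p ∧ d = p ^ d.factorization p
    · exact hc.2
    · rw [if_neg hc] at hd; exact absurd rfl hd
  case hh =>
    intro e he
    rw [hS_apply] at he
    by_cases hc : (∀ q ∈ S, Q.factorization q ≤ e.factorization q)
        ∧ (∀ q ∈ Q.primeFactors, q ∉ S → ¬ q ∣ e)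
    · exact hc.2 p hpQ hpS
    · rw [if_neg hc] at he; exact absurd rfl he
  set A := m.factorization p with hA
  set m' := m / p ^ m.factorization p with hm'def
  have hm'0 : m' ≠ 0 := (Nat.ordCompl_pos p hm).ne'
  have hpm' : ¬ p ∣ m' := Nat.not_dvd_ordCompl hp hm
  rw [hS_apply, hS_apply, ellp_apply]
  have hAA : (p ^ A).factorization p = A := by
    rw [hp.factorization_pow, Finsupp.single_eq_same]
  rw [hAA]
  simp only [and_true, eq_self_iff_true]
  have hCiff : ((∀ q ∈ insert p S, Q.factorization q ≤ m.factorization q)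
      ∧ (∀ q ∈ Q.primeFactors, q ∉ insert p S → ¬ q ∣ m))
      ↔ (Q.factorization p ≤ A ∧ ((∀ q ∈ S, Q.factorization q ≤ m'.factorization q)
        ∧ (∀ q ∈ Q.primeFactors, q ∉ S → ¬ q ∣ m'))) := by
    constructor
    · rintro ⟨c1, c2⟩
      refine ⟨c1 p (Finset.mem_insert_self p S), ⟨fun q hq => ?_, fun q hq hqS => ?_⟩⟩
      · have hqp : q ≠ p := fun h0 => hpS (h0 ▸ hq)
        rw [factorization_ordCompl_eq hp hm hqp]
        exact c1 q (Finset.mem_insert_of_mem hq)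
      · by_cases hqp : q = p
        · rw [hqp]; exact hpm'
        · intro hd
          exact c2 q hq (by simp [Finset.mem_insert, hqp, hqS])
            ((dvd_ordCompl_iff hp hm (Nat.prime_of_mem_primeFactors hq) hqp).mp hd)
    · rintro ⟨he, c1', c2'⟩
      constructor
      · intro q hq
        rcases Finset.mem_insert.mp hq with h0 | h0
        · rw [h0]; exact he
        · have hqp : q ≠ p := fun hc => hpS (hc ▸ h0)
          rw [← factorization_ordCompl_eq hp hm hqp]
          exact c1' q h0
      · intro q hq hqi
        have hqp : q ≠ p := fun hc => hqi (hc ▸ Finset.mem_insert_self p S)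
        have hqS : q ∉ S := fun hc => hqi (Finset.mem_insert_of_mem hc)
        intro hd
        exact c2' q hq hqS ((dvd_ordCompl_iff hp hm (Nat.prime_of_mem_primeFactors hq) hqp).mpr hd)
  by_cases hC : Q.factorization p ≤ A ∧ ((∀ q ∈ S, Q.factorization q ≤ m'.factorization q)
      ∧ (∀ q ∈ Q.primeFactors, q ∉ S → ¬ q ∣ m'))
  · rw [if_pos (hCiff.mpr hC), if_pos hC.1, if_pos hC.2]
    have hcop : (p ^ A).Coprime m' := Nat.Coprime.pow_left A (hp.coprime_iff_not_dvd.mpr hpm')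
    rw [← (cA_mult n).map_mul_of_coprime hcop, Nat.ordProj_mul_ordCompl_eq_self]
  · rw [if_neg (fun hc => hC (hCiff.mp hc))]
    rcases not_and_or.mp hC with h | h
    · rw [if_neg h, zero_mul]
    · rw [if_neg h, mul_zero]

lemma nuS_step {S : Finset ℕ} {p : ℕ} (hp : p.Prime) (hpS : p ∉ S) :
    nuS (insert p S) = geo p * nuS S := by
  ext m
  by_cases hm : m = 0
  · rw [hm, ArithmeticFunction.map_zero, ArithmeticFunction.map_zero]
  rw [peel hp _ _ ?hl ?hh hm]
  case hl =>
    intro d hd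
    rw [geo_apply] at hd
    by_cases hc : d = p ^ d.factorization p
    · exact hc
    · rw [if_neg hc] at hd; exact absurd rfl hd
  case hh =>
    intro e he
    rw [nuS_apply] at he
    by_cases hc : e ≠ 0 ∧ e.primeFactors ⊆ S
    · intro hd
      exact hpS (hc.2 (Nat.mem_primeFactors.mpr ⟨hp, hd, hc.1⟩))
    · rw [if_neg hc] at he; exact absurd rfl he
  set A := m.factorization p with hA
  set m' := m / p ^ m.factorization p with hm'def
  have hm'0 : m' ≠ 0 := (Nat.ordCompl_pos p hm).ne'
  have hpm' : ¬ p ∣ m' := Nat.not_dvd_ordCompl hp hm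
  rw [nuS_apply, nuS_apply, geo_apply]
  have hAA : (p ^ A).factorization p = A := by
    rw [hp.factorization_pow, Finsupp.single_eq_same]
  rw [hAA, if_pos rfl, one_mul]
  have hiff : (m ≠ 0 ∧ m.primeFactors ⊆ insert p S) ↔ (m' ≠ 0 ∧ m'.primeFactors ⊆ S) := by
    constructor
    · rintro ⟨-, hsub⟩
      refine ⟨hm'0, fun q hq => ?_⟩
      obtain ⟨hqp, hqd, -⟩ := Nat.mem_primeFactors.mp hq
      have hqne : q ≠ p := fun hc => hpm' (hc ▸ hqd)
      have : q ∈ m.primeFactors := Nat.mem_primeFactors.mpr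
        ⟨hqp, (dvd_ordCompl_iff hp hm hqp hqne).mp hqd, hm⟩
      rcases Finset.mem_insert.mp (hsub this) with h0 | h0
      · exact absurd h0 hqne
      · exact h0
    · rintro ⟨-, hsub⟩
      refine ⟨hm, fun q hq => ?_⟩
      obtain ⟨hqp, hqd, -⟩ := Nat.mem_primeFactors.mp hq
      by_cases hqne : q = p
      · exact hqne ▸ Finset.mem_insert_self p S
      · refine Finset.mem_insert_of_mem (hsub (Nat.mem_primeFactors.mpr
          ⟨hqp, (dvd_ordCompl_iff hp hm hqp hqne).mpr hqd, hm'0⟩))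
  rw [if_congr hiff rfl rfl]

lemma hS_top (n Q : ℕ) (hQ : Q ≠ 0) : hS n Q Q.primeFactors = gA n Q := by
  ext m
  by_cases hm : m = 0
  · rw [hm, ArithmeticFunction.map_zero, ArithmeticFunction.map_zero]
  rw [hS_apply, gA_apply]
  have hiff : ((∀ p ∈ Q.primeFactors, Q.factorization p ≤ m.factorization p)
      ∧ (∀ p ∈ Q.primeFactors, p ∉ Q.primeFactors → ¬ p ∣ m)) ↔ Q ∣ m := by
    constructor
    · rintro ⟨c1, -⟩
      rw [← Nat.factorization_le_iff_dvd hQ hm]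
      intro q
      by_cases hq : q ∈ Q.primeFactors
      · exact c1 q hq
      · have : Q.factorization q = 0 := by
          rw [← Nat.support_factorization] at hq
          exact Finsupp.notMem_support_iff.mp hq
        simp [this]
    · intro hd
      refine ⟨fun q hq => ?_, fun q hq hq' => absurd hq hq'⟩
      exact (Nat.factorization_le_iff_dvd hQ hm).mpr hd q
  rw [if_congr hiff rfl rfl]


lemma natCast_pow_cpow (p : ℕ) (w : ℂ) (a : ℕ) :
    ((p ^ a : ℕ) : ℂ) ^ w = (((p : ℕ) : ℂ) ^ w) ^ a := by
  induction a with
  | zero => simp [Complex.one_cpow]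
  | succ a ih =>
    have h1 : ((p ^ (a + 1) : ℕ) : ℂ) = (((p ^ a : ℕ) : ℝ) : ℂ) * (((p : ℕ) : ℝ) : ℂ) := by
      push_cast; ring
    rw [h1, Complex.mul_cpow_ofReal_nonneg (by positivity) (by positivity)]
    simp only [Complex.ofReal_natCast]
    rw [ih, pow_succ]

lemma abs_ite_cA_le (n m : ℕ) (hn : n ≠ 0) (hm : m ≠ 0) {c : Prop} [Decidable c] :
    ‖if c then cA n m else 0‖ ≤ (n : ℝ) * n := by
  split
  · exact cA_bound n hn m hm
  · simpa using mul_nonneg (Nat.cast_nonneg n) (Nat.cast_nonneg n)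

lemma summable_hS (n Q : ℕ) (hn : n ≠ 0) (S : Finset ℕ) {w : ℂ} (hw : 1 < w.re) :
    LSeriesSummable (fun m => hS n Q S m) w :=
  LSeriesSummable_of_bounded_of_one_lt_re (fun m hm => by
    rw [hS_apply]; exact abs_ite_cA_le n m hn hm) hw

lemma summable_ellp (n e p : ℕ) (hn : n ≠ 0) {w : ℂ} (hw : 1 < w.re) :
    LSeriesSummable (fun m => ellp n e p m) w :=
  LSeriesSummable_of_bounded_of_one_lt_re (fun m hm => by
    rw [ellp_apply]; exact abs_ite_cA_le n m hn hm) hw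

lemma summable_geo (p : ℕ) {w : ℂ} (hw : 1 < w.re) :
    LSeriesSummable (fun m => geo p m) w :=
  LSeriesSummable_of_bounded_of_one_lt_re (m := 1) (fun m hm => by
    rw [geo_apply]; split <;> simp) hw

lemma summable_nuS (S : Finset ℕ) {w : ℂ} (hw : 1 < w.re) :
    LSeriesSummable (fun m => nuS S m) w :=
  LSeriesSummable_of_bounded_of_one_lt_re (m := 1) (fun m hm => by
    rw [nuS_apply]; split <;> simp) hw

lemma LSeries_hS (n Q : ℕ) (hn : n ≠ 0) {w : ℂ} (hw : 1 < w.re) :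
    ∀ S : Finset ℕ, S ⊆ Q.primeFactors →
      LSeries (fun m => hS n Q S m) w
        = (∏ p ∈ S, LSeries (fun m => ellp n (Q.factorization p) p m) w)
            * LSeries (fun m => hS n Q ∅ m) w := by
  intro S
  induction S using Finset.induction_on with
  | empty => intro _; rw [Finset.prod_empty, one_mul]
  | @insert p S' hpS ih =>
    intro hsub
    have hpQ : p ∈ Q.primeFactors := hsub (Finset.mem_insert_self p S')
    have hsub' : S' ⊆ Q.primeFactors := (Finset.subset_insert p S').trans hsub
    rw [hS_step n Q hpQ hpS,
      LSeries_mul' (summable_ellp n (Q.factorization p) p hn hw) (summable_hS n Q hn S' hw),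
      ih hsub', Finset.prod_insert hpS]
    ring

lemma LSeries_nuS_prod {w : ℂ} (hw : 1 < w.re) :
    ∀ S : Finset ℕ, (∀ p ∈ S, p.Prime) →
      LSeries (fun m => nuS S m) w
        = (∏ p ∈ S, LSeries (fun m => geo p m) w) * LSeries (fun m => nuS ∅ m) w := by
  intro S
  induction S using Finset.induction_on with
  | empty => intro _; rw [Finset.prod_empty, one_mul]
  | @insert p S' hpS ih =>
    intro hsub
    have hp : p.Prime := hsub p (Finset.mem_insert_self p S')
    have hsub' : ∀ q ∈ S', q.Prime := fun q hq => hsub q (Finset.mem_insert_of_mem hq)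
    rw [nuS_step hp hpS,
      LSeries_mul' (summable_geo p hw) (summable_nuS S' hw),
      ih hsub', Finset.prod_insert hpS]
    ring

lemma LSeries_nuS_empty (w : ℂ) : LSeries (fun m => nuS ∅ m) w = 1 := by
  have hcong : ∀ {m : ℕ}, m ≠ 0 → nuS ∅ m = LSeries.delta m := by
    intro m hm
    rw [nuS_apply, LSeries.delta]
    have : (m ≠ 0 ∧ m.primeFactors ⊆ ∅) ↔ m = 1 := by
      rw [Finset.subset_empty]
      constructor
      · rintro ⟨h0, h1⟩
        rcases Nat.primeFactors_eq_empty.mp h1 with h | h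
        · exact absurd h h0
        · exact h
      · rintro rfl
        simp [Nat.primeFactors_one]
    rw [if_congr this rfl rfl]
  rw [LSeries_congr hcong w]
  exact congrFun LSeries_delta w

lemma LSeries_eq_tsum_pow (F : ArithmeticFunction ℂ) {p : ℕ} (hp : p.Prime)
    (hF : ∀ d, F d ≠ 0 → d = p ^ d.factorization p) (w : ℂ) :
    LSeries (fun m => F m) w = ∑' a : ℕ, F (p ^ a) / ((p : ℂ) ^ w) ^ a := by
  rw [LSeries]
  rw [← Function.Injective.tsum_eq (g := fun a : ℕ => p ^ a)
    (Nat.pow_right_injective hp.two_le) ?hsupp]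
  · apply tsum_congr
    intro a
    rw [LSeries.term_of_ne_zero (pow_ne_zero a hp.ne_zero), natCast_pow_cpow]
  case hsupp =>
    intro m hm
    have hm0 : m ≠ 0 := by
      rintro rfl
      exact hm (LSeries.term_zero _ _)
    have hFm : F m ≠ 0 := by
      intro h0
      apply hm
      rw [LSeries.term_of_ne_zero hm0, h0, zero_div]
    exact ⟨m.factorization p, (hF m hFm).symm⟩

lemma LSeries_geo_eval (p : ℕ) (hp : p.Prime) {w : ℂ} (hw : 1 < w.re) :
    LSeries (fun m => geo p m) w = (1 - (p : ℂ) ^ (-w))⁻¹ := by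
  have hF : ∀ d, geo p d ≠ 0 → d = p ^ d.factorization p := by
    intro d hd
    rw [geo_apply] at hd
    by_cases hc : d = p ^ d.factorization p
    · exact hc
    · rw [if_neg hc] at hd; exact absurd rfl hd
  rw [LSeries_eq_tsum_pow (geo p) hp hF w]
  have hval : ∀ a : ℕ, geo p (p ^ a) / ((p : ℂ) ^ w) ^ a = (((p : ℂ) ^ w)⁻¹) ^ a := by
    intro a
    rw [geo_apply, if_pos (by rw [hp.factorization_pow, Finsupp.single_eq_same]), one_div, inv_pow]
  have hnorm : ‖((p : ℂ) ^ w)⁻¹‖ < 1 := by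
    rw [norm_inv]
    have hcast : ((p : ℕ) : ℂ) = (((p : ℕ) : ℝ) : ℂ) := by push_cast; ring
    rw [hcast]
    rw [Complex.norm_cpow_eq_rpow_re_of_pos (by exact_mod_cast hp.pos)]
    have h1 : (1 : ℝ) < (p : ℝ) := by exact_mod_cast hp.one_lt
    have h2 : (1 : ℝ) < (p : ℝ) ^ w.re :=
      (Real.one_lt_rpow_iff_of_pos (by positivity)).mpr (Or.inl ⟨h1, by linarith⟩)
    rw [inv_lt_one_iff₀]
    right
    exact h2
  rw [tsum_congr hval, tsum_geometric_of_norm_lt_one hnorm, Complex.cpow_neg]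

lemma LSeries_ellp_eval (n p : ℕ) (hp : p.Prime) (e : ℕ) (he : e ≠ 0) (w : ℂ) :
    LSeries (fun m => ellp n e p m) w
      = ∑' a : ℕ, (if e ≤ a then cA n (p ^ a) else 0) / ((p : ℂ) ^ w) ^ a := by
  have hF : ∀ d, ellp n e p d ≠ 0 → d = p ^ d.factorization p := by
    intro d hd
    rw [ellp_apply] at hd
    by_cases hc : e ≤ d.factorization p ∧ d = p ^ d.factorization p
    · exact hc.2
    · rw [if_neg hc] at hd; exact absurd rfl hd
  rw [LSeries_eq_tsum_pow _ hp hF w]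
  apply tsum_congr
  intro a
  congr 1
  rw [ellp_apply, hp.factorization_pow, Finsupp.single_eq_same]
  rw [if_congr (and_iff_left rfl) rfl rfl]


/-- Moebius function restricted to integers coprime to `Q`. -/
def mu' (Q : ℕ) : ArithmeticFunction ℂ :=
  ⟨fun m => if m.Coprime Q then ((moebius m : ℤ) : ℂ) else 0, by
    split
    · simp
    · rfl⟩

lemma mu'_apply (Q m : ℕ) : mu' Q m = if m.Coprime Q then ((moebius m : ℤ) : ℂ) else 0 := rfl

lemma mu'_mult (Q : ℕ) : (mu' Q).IsMultiplicative := by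
  constructor
  · rw [mu'_apply, if_pos (Nat.coprime_one_left Q), moebius_apply_one]
    norm_num
  · intro d e hde
    simp only [mu'_apply]
    by_cases hd : d.Coprime Q
    · by_cases he : e.Coprime Q
      · rw [if_pos (Nat.Coprime.mul hd he), if_pos hd, if_pos he,
          isMultiplicative_moebius.map_mul_of_coprime hde]
        push_cast
        ring
      · rw [if_neg (fun hc => he (Nat.Coprime.coprime_dvd_left (dvd_mul_left e d) hc)),
          if_neg he, mul_zero]
    · rw [if_neg (fun hc => hd (Nat.Coprime.coprime_dvd_left (dvd_mul_right d e) hc)),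
        if_neg hd, zero_mul]

lemma summable_mu' (Q : ℕ) {w : ℂ} (hw : 1 < w.re) :
    LSeriesSummable (fun m => mu' Q m) w :=
  LSeriesSummable_of_bounded_of_one_lt_re (m := 1) (fun m hm => by
    rw [mu'_apply]
    split
    · rw [Complex.norm_intCast]
      exact_mod_cast abs_moebius_le_one
    · simp) hw

/-- `d ↦ d · [d ∣ n, (d,Q) = 1]`. -/
def f1' (n Q : ℕ) : ArithmeticFunction ℂ :=
  ⟨fun d => if d ∣ n ∧ d.Coprime Q ∧ d ≠ 0 then (d : ℂ) else 0, by
    rw [if_neg (by simp)]⟩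

lemma f1'_apply (n Q d : ℕ) :
    f1' n Q d = if d ∣ n ∧ d.Coprime Q ∧ d ≠ 0 then (d : ℂ) else 0 := rfl

lemma f1'_mult (n Q : ℕ) : (f1' n Q).IsMultiplicative := by
  constructor
  · rw [f1'_apply, if_pos ⟨one_dvd n, Nat.coprime_one_left Q, one_ne_zero⟩, Nat.cast_one]
  · intro d e hde
    simp only [f1'_apply]
    by_cases hd : d ∣ n ∧ d.Coprime Q ∧ d ≠ 0
    · by_cases he : e ∣ n ∧ e.Coprime Q ∧ e ≠ 0
      · rw [if_pos ⟨hde.mul_dvd_of_dvd_of_dvd hd.1 he.1, Nat.Coprime.mul hd.2.1 he.2.1,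
          mul_ne_zero hd.2.2 he.2.2⟩, if_pos hd, if_pos he]
        push_cast
        ring
      · rw [if_neg (fun hc => he ⟨(dvd_mul_left e d).trans hc.1,
          Nat.Coprime.coprime_dvd_left (dvd_mul_left e d) hc.2.1,
          fun h0 => hc.2.2 (by simp [h0])⟩), if_pos hd, if_neg he, mul_zero]
    · rw [if_neg (fun hc => hd ⟨(dvd_mul_right d e).trans hc.1,
        Nat.Coprime.coprime_dvd_left (dvd_mul_right d e) hc.2.1,
        fun h0 => hc.2.2 (by simp [h0])⟩), if_neg hd, zero_mul]

lemma summable_f1' (n Q : ℕ) (hn : n ≠ 0) {w : ℂ} (hw : 1 < w.re) :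
    LSeriesSummable (fun m => f1' n Q m) w :=
  LSeriesSummable_of_bounded_of_one_lt_re (m := (n : ℝ)) (fun m hm => by
    rw [f1'_apply]
    split
    · rename_i hc
      rw [Complex.norm_natCast]
      exact_mod_cast Nat.le_of_dvd (Nat.pos_of_ne_zero hn) hc.1
    · simp) hw

lemma hS_empty_mult (n Q : ℕ) : (hS n Q ∅).IsMultiplicative := by
  constructor
  · rw [hS_apply, if_pos, (cA_mult n).map_one]
    exact ⟨fun p hp => absurd hp (Finset.notMem_empty p),
      fun p hp _ hd => (Nat.prime_of_mem_primeFactors hp).one_lt.ne' (Nat.dvd_one.mp hd)⟩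
  · intro d e hde
    simp only [hS_apply]
    have htriv : ∀ x : ℕ, (((∀ p ∈ (∅ : Finset ℕ), Q.factorization p ≤ x.factorization p)
        ∧ (∀ p ∈ Q.primeFactors, p ∉ (∅ : Finset ℕ) → ¬ p ∣ x)))
        ↔ (∀ p ∈ Q.primeFactors, ¬ p ∣ x) := by
      intro x
      constructor
      · rintro ⟨-, h⟩; exact fun p hp => h p hp (Finset.notMem_empty p)
      · intro h; exact ⟨fun p hp => absurd hp (Finset.notMem_empty p), fun p hp _ => h p hp⟩
    rw [if_congr (htriv (d * e)) rfl rfl, if_congr (htriv d) rfl rfl, if_congr (htriv e) rfl rfl]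
    have hsplit : (∀ p ∈ Q.primeFactors, ¬ p ∣ d * e)
        ↔ (∀ p ∈ Q.primeFactors, ¬ p ∣ d) ∧ (∀ p ∈ Q.primeFactors, ¬ p ∣ e) := by
      constructor
      · intro h
        exact ⟨fun p hp hd => h p hp (hd.mul_right e), fun p hp hd2 => h p hp (hd2.mul_left d)⟩
      · rintro ⟨h1, h2⟩ p hp hd
        rcases ((Nat.prime_of_mem_primeFactors hp).dvd_mul).mp hd with h | h
        · exact h1 p hp h
        · exact h2 p hp h
    by_cases h1 : ∀ p ∈ Q.primeFactors, ¬ p ∣ d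
    · by_cases h2 : ∀ p ∈ Q.primeFactors, ¬ p ∣ e
      · rw [if_pos (hsplit.mpr ⟨h1, h2⟩), if_pos h1, if_pos h2,
          (cA_mult n).map_mul_of_coprime hde]
      · rw [if_neg (fun hc => h2 (hsplit.mp hc).2), if_neg h2, mul_zero]
    · rw [if_neg (fun hc => h1 (hsplit.mp hc).1), if_neg h1, zero_mul]

lemma hS_empty_eq (n Q : ℕ) (hQ : Q ≠ 0) : hS n Q ∅ = f1' n Q * mu' Q := by
  rw [ArithmeticFunction.IsMultiplicative.eq_iff_eq_on_prime_powers _ (hS_empty_mult n Q)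
    _ ((f1'_mult n Q).mul (mu'_mult Q))]
  intro p i hp
  rcases Nat.eq_zero_or_pos i with hi | hi
  · rw [hi, pow_zero, (hS_empty_mult n Q).map_one, ((f1'_mult n Q).mul (mu'_mult Q)).map_one]
  have hi0 : i ≠ 0 := hi.ne'
  rw [hS_apply, mul_apply,
    Nat.sum_divisorsAntidiagonal (fun a b => f1' n Q a * mu' Q b),
    Nat.sum_divisors_prime_pow hp]
  by_cases hpQ : p ∣ Q
  · rw [if_neg]
    · symm
      apply Finset.sum_eq_zero
      intro j hj
      rcases Nat.eq_zero_or_pos j with hj0 | hj0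
      · rw [hj0]
        have : ¬ (p ^ i / p ^ 0).Coprime Q := by
          rw [pow_zero, Nat.div_one]
          intro hc
          exact (hp.coprime_iff_not_dvd.mp
            (Nat.Coprime.coprime_dvd_left (dvd_pow_self p hi0) hc)) hpQ
        rw [mu'_apply, if_neg this, mul_zero]
      · have : ¬ ((p ^ j ∣ n) ∧ (p ^ j).Coprime Q ∧ p ^ j ≠ 0) := by
          rintro ⟨-, hc, -⟩
          exact (hp.coprime_iff_not_dvd.mp
            (Nat.Coprime.coprime_dvd_left (dvd_pow_self p hj0.ne') hc)) hpQ
        rw [f1'_apply, if_neg this, zero_mul]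
    · rintro ⟨-, hcond⟩
      exact hcond p (Nat.mem_primeFactors.mpr ⟨hp, hpQ, hQ⟩) (Finset.notMem_empty p)
        (dvd_pow_self p hi0)
  · have hcop : p.Coprime Q := hp.coprime_iff_not_dvd.mpr hpQ
    rw [if_pos]
    · rw [cA_pp_sum n p hp i]
      refine Finset.sum_congr rfl (fun j hj => ?_)
      have hj' : j ≤ i := Nat.lt_succ_iff.mp (Finset.mem_range.mp hj)
      rw [f1'_apply, mu'_apply, Nat.pow_div hj' hp.pos,
        if_pos (Nat.Coprime.pow_left _ hcop)]
      by_cases hd : p ^ j ∣ n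
      · rw [if_pos hd, if_pos (show p ^ j ∣ n ∧ (p ^ j).Coprime Q ∧ p ^ j ≠ 0 from
          ⟨hd, Nat.Coprime.pow_left _ hcop, pow_ne_zero j hp.ne_zero⟩)]
        push_cast
        ring
      · have hneg : ¬ (p ^ j ∣ n ∧ (p ^ j).Coprime Q ∧ p ^ j ≠ 0) := fun hc => hd hc.1
        rw [if_neg hd, if_neg hneg]
    · refine ⟨fun q hq => absurd hq (Finset.notMem_empty q), fun q hq _ hqd => ?_⟩
      have hqp := Nat.prime_of_mem_primeFactors hq
      have : q = p := (Nat.prime_dvd_prime_iff_eq hqp hp).mp (hqp.dvd_of_dvd_pow hqd)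
      rw [this] at hq
      exact hpQ (Nat.mem_primeFactors.mp hq).2.1

lemma nuS_mult (S : Finset ℕ) : (nuS S).IsMultiplicative := by
  constructor
  · rw [nuS_apply, if_pos ⟨one_ne_zero, by simp [Nat.primeFactors_one]⟩]
  · intro d e hde
    simp only [nuS_apply]
    by_cases hd : d ≠ 0 ∧ d.primeFactors ⊆ S
    · by_cases he : e ≠ 0 ∧ e.primeFactors ⊆ S
      · have hsub : (d * e).primeFactors ⊆ S := by
          rw [Nat.primeFactors_mul hd.1 he.1]
          exact Finset.union_subset hd.2 he.2
        rw [if_pos ⟨mul_ne_zero hd.1 he.1, hsub⟩, if_pos hd, if_pos he, mul_one]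
      · rw [if_neg (fun hc => he ⟨right_ne_zero_of_mul hc.1,
          (Nat.primeFactors_mono (dvd_mul_left e d) hc.1).trans hc.2⟩), if_neg he, mul_zero]
    · rw [if_neg (fun hc => hd ⟨left_ne_zero_of_mul hc.1,
        (Nat.primeFactors_mono (dvd_mul_right d e) hc.1).trans hc.2⟩), if_neg hd, zero_mul]

lemma mu'_mul_zeta_eq (Q : ℕ) (hQ : Q ≠ 0) :
    mu' Q * (↑(zeta : ArithmeticFunction ℕ) : ArithmeticFunction ℂ) = nuS Q.primeFactors := by
  rw [ArithmeticFunction.IsMultiplicative.eq_iff_eq_on_prime_powers _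
    ((mu'_mult Q).mul (isMultiplicative_zeta.natCast)) _ (nuS_mult Q.primeFactors)]
  intro p i hp
  rcases Nat.eq_zero_or_pos i with hi | hi
  · rw [hi, pow_zero, ((mu'_mult Q).mul (isMultiplicative_zeta.natCast)).map_one,
      (nuS_mult Q.primeFactors).map_one]
  have hi0 : i ≠ 0 := hi.ne'
  have hpf : (p ^ i).primeFactors = {p} := by
    rw [Nat.primeFactors_pow p hi0, Nat.Prime.primeFactors hp]
  rw [coe_mul_zeta_apply, Nat.sum_divisors_prime_pow hp, nuS_apply]
  by_cases hpQ : p ∣ Q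
  · rw [if_pos ⟨pow_ne_zero i hp.ne_zero, by
      rw [hpf]; exact Finset.singleton_subset_iff.mpr (Nat.mem_primeFactors.mpr ⟨hp, hpQ, hQ⟩)⟩]
    rw [Finset.sum_eq_single 0]
    · rw [pow_zero, (mu'_mult Q).map_one]
    · intro j hj hj0
      have : ¬ (p ^ j).Coprime Q := by
        intro hc
        exact (hp.coprime_iff_not_dvd.mp
          (Nat.Coprime.coprime_dvd_left (dvd_pow_self p hj0) hc)) hpQ
      rw [mu'_apply, if_neg this]
    · intro h0
      exact absurd (Finset.mem_range.mpr (Nat.succ_pos i)) h0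
  · have hcop : p.Coprime Q := hp.coprime_iff_not_dvd.mpr hpQ
    rw [if_neg (fun hc => hpQ (by
      have := hc.2
      rw [hpf, Finset.singleton_subset_iff] at this
      exact (Nat.mem_primeFactors.mp this).2.1))]
    have hcong : ∀ j ∈ Finset.range (i + 1), mu' Q (p ^ j) = ((moebius (p ^ j) : ℤ) : ℂ) := by
      intro j hj
      rw [mu'_apply, if_pos (Nat.Coprime.pow_left _ hcop)]
    rw [Finset.sum_congr rfl hcong]
    have hsum := Nat.sum_divisors_prime_pow (f := fun d => ((moebius d : ℤ) : ℂ)) (k := i) hp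
    rw [← hsum, sum_moebius]
    rw [if_neg (Nat.one_lt_pow hi0 hp.one_lt).ne']

lemma zeta_summable' {w : ℂ} (hw : 1 < w.re) :
    LSeriesSummable (fun m => (↑(zeta : ArithmeticFunction ℕ) : ArithmeticFunction ℂ) m) w :=
  LSeriesSummable_of_bounded_of_one_lt_re (m := 1) (fun m hm => by
    rw [natCoe_apply, zeta_apply_ne hm]; norm_num) hw

lemma LSeries_zetaC {w : ℂ} (hw : 1 < w.re) :
    LSeries (fun m => (↑(zeta : ArithmeticFunction ℕ) : ArithmeticFunction ℂ) m) w
      = riemannZeta w := by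
  rw [LSeries_congr (g := 1) (fun {m} hm => by
    rw [natCoe_apply, zeta_apply_ne hm, Pi.one_apply]; norm_num) w]
  exact LSeries_one_eq_riemannZeta hw

lemma LSeries_mu'_riemann (Q : ℕ) (hQ : Q ≠ 0) {w : ℂ} (hw : 1 < w.re) :
    LSeries (fun m => mu' Q m) w * riemannZeta w
      = ∏ p ∈ Q.primeFactors, (1 - (p : ℂ) ^ (-w))⁻¹ := by
  rw [← LSeries_zetaC hw, ← LSeries_mul' (summable_mu' Q hw) (zeta_summable' hw),
    mu'_mul_zeta_eq Q hQ,
    LSeries_nuS_prod hw Q.primeFactors (fun p hp => Nat.prime_of_mem_primeFactors hp),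
    LSeries_nuS_empty, mul_one]
  exact Finset.prod_congr rfl
    (fun p hp => LSeries_geo_eval p (Nat.prime_of_mem_primeFactors hp) hw)


lemma cpow_ne_one (p : ℕ) (hp : 2 ≤ p) {z : ℂ} (hz : z.re < 0) : (p : ℂ) ^ z ≠ 1 := by
  intro h
  have hp1 : (1 : ℝ) < (p : ℝ) := by exact_mod_cast hp
  have hcast : ((p : ℕ) : ℂ) = (((p : ℕ) : ℝ) : ℂ) := by push_cast; ring
  have habs : ‖(p : ℂ) ^ z‖ = (p : ℝ) ^ z.re := by
    rw [hcast]
    exact Complex.norm_cpow_eq_rpow_re_of_pos (by linarith) z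
  rw [h, norm_one] at habs
  have hlt : (p : ℝ) ^ z.re < 1 := Real.rpow_lt_one_of_one_lt_of_neg hp1 hz
  rw [← habs] at hlt
  exact lt_irrefl _ hlt

lemma y_ne_one (p : ℕ) (hp : p.Prime) {w : ℂ} (hw : 1 < w.re) : (p : ℂ) ^ ((1 : ℂ) - w) ≠ 1 :=
  cpow_ne_one p hp.two_le (by simp [Complex.sub_re, Complex.one_re]; linarith)

lemma x_ne_one (p : ℕ) (hp : p.Prime) {w : ℂ} (hw : 1 < w.re) : (p : ℂ) ^ (-w) ≠ 1 :=
  cpow_ne_one p hp.two_le (by simp [Complex.neg_re]; linarith)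

lemma y_eq_p_mul_x (p : ℕ) (hp : p.Prime) (w : ℂ) :
    (p : ℂ) ^ ((1 : ℂ) - w) = (p : ℂ) * (p : ℂ) ^ (-w) := by
  have hp0 : (p : ℂ) ≠ 0 := Nat.cast_ne_zero.mpr hp.ne_zero
  rw [sub_eq_add_neg, Complex.cpow_add _ _ hp0, Complex.cpow_one]

lemma block_sum (y c : ℂ) (hy : y ≠ 1) (E' V : ℕ) :
    ∑ a ∈ Finset.range (V + 2), (if E' + 1 ≤ a then
        ((if a ≤ V then y ^ a else 0) - (if a - 1 ≤ V then c * y ^ (a - 1) else 0)) else 0)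
      = if E' + 1 ≤ V + 1 then
          ((1 - c) * y ^ (V + 1) - y ^ (E' + 1) + c * y ^ E') / (y - 1) else 0 := by
  have hy' : y - 1 ≠ 0 := sub_ne_zero.mpr hy
  have hsplit : ∀ a ∈ Finset.range (V + 2), (if E' + 1 ≤ a then
        ((if a ≤ V then y ^ a else 0) - (if a - 1 ≤ V then c * y ^ (a - 1) else 0)) else 0)
      = (if E' + 1 ≤ a ∧ a ≤ V then y ^ a else 0)
        - (if E' + 1 ≤ a ∧ a - 1 ≤ V then c * y ^ (a - 1) else 0) := by
    intro a _
    by_cases h : E' + 1 ≤ a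
    · rw [if_pos h, if_congr (and_iff_right h) rfl rfl, if_congr (and_iff_right h) rfl rfl]
    · rw [if_neg h, if_neg (show ¬(E' + 1 ≤ a ∧ a ≤ V) from fun hc => h hc.1),
        if_neg (show ¬(E' + 1 ≤ a ∧ a - 1 ≤ V) from fun hc => h hc.1), sub_zero]
  rw [Finset.sum_congr rfl hsplit, Finset.sum_sub_distrib, ← Finset.sum_filter, ← Finset.sum_filter]
  have h1 : (Finset.range (V + 2)).filter (fun a => E' + 1 ≤ a ∧ a ≤ V)
      = Finset.Ico (E' + 1) (V + 1) := by
    ext a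
    simp only [Finset.mem_filter, Finset.mem_range, Finset.mem_Ico]
    omega
  have h2 : (Finset.range (V + 2)).filter (fun a => E' + 1 ≤ a ∧ a - 1 ≤ V)
      = Finset.Ico (E' + 1) (V + 2) := by
    ext a
    simp only [Finset.mem_filter, Finset.mem_range, Finset.mem_Ico]
    omega
  rw [h1, h2]
  by_cases hEV : E' + 1 ≤ V + 1
  · rw [if_pos hEV]
    have hre : ∑ a ∈ Finset.Ico (E' + 1) (V + 2), c * y ^ (a - 1)
        = ∑ b ∈ Finset.Ico E' (V + 1), c * y ^ b := by
      rw [Finset.sum_Ico_eq_sum_range, Finset.sum_Ico_eq_sum_range]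
      have hlen : V + 2 - (E' + 1) = V + 1 - E' := by omega
      rw [hlen]
      refine Finset.sum_congr rfl (fun i _ => ?_)
      have : E' + 1 + i - 1 = E' + i := by omega
      rw [this]
    rw [hre, geom_sum_Ico hy hEV, ← Finset.mul_sum, geom_sum_Ico hy (by omega : E' ≤ V + 1)]
    field_simp
    ring
  · rw [if_neg hEV,
      Finset.Ico_eq_empty (by omega : ¬ E' + 1 < V + 1),
      Finset.Ico_eq_empty (by omega : ¬ E' + 1 < V + 2),
      Finset.sum_empty, Finset.sum_empty, sub_zero]

lemma Lellp_closed (n p : ℕ) (hp : p.Prime) (hn : n ≠ 0) (E' : ℕ) {w : ℂ} (hw : 1 < w.re) :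
    LSeries (fun m => ellp n (E' + 1) p m) w
      = if E' + 1 ≤ n.factorization p + 1 then
          ((1 - (p : ℂ) ^ ((1 : ℂ) - w) * (p : ℂ)⁻¹) * ((p : ℂ) ^ ((1 : ℂ) - w)) ^ (n.factorization p + 1)
            - (1 - (p : ℂ)⁻¹) * ((p : ℂ) ^ ((1 : ℂ) - w)) ^ (E' + 1)) / ((p : ℂ) ^ ((1 : ℂ) - w) - 1)
        else 0 := by
  have hp0 : (p : ℂ) ≠ 0 := Nat.cast_ne_zero.mpr hp.ne_zero
  set v := n.factorization p with hv
  set y := (p : ℂ) ^ ((1 : ℂ) - w) with hydef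
  set x := (p : ℂ) ^ (-w) with hxdef
  have hyx : y = (p : ℂ) * x := y_eq_p_mul_x p hp w
  have hy1 : y ≠ 1 := y_ne_one p hp hw
  have hxinv : ((p : ℂ) ^ w)⁻¹ = x := by rw [hxdef, Complex.cpow_neg]
  rw [LSeries_ellp_eval n p hp (E' + 1) (Nat.succ_ne_zero E') w]
  have hzero : ∀ a ∉ Finset.range (v + 2),
      (if E' + 1 ≤ a then cA n (p ^ a) else 0) / ((p : ℂ) ^ w) ^ a = 0 := by
    intro a ha
    have ha2 : v + 2 ≤ a := by
      by_contra hc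
      exact ha (Finset.mem_range.mpr (by omega))
    have hc1 : ¬ p ^ a ∣ n := fun h => by
      have := (hp.pow_dvd_iff_le_factorization hn).mp h
      omega
    have hc2 : ¬ p ^ (a - 1) ∣ n := fun h => by
      have := (hp.pow_dvd_iff_le_factorization hn).mp h
      omega
    rw [cA_prime_pow n p hp a (by omega), if_neg hc1, if_neg hc2, sub_zero]
    split <;> simp
  rw [tsum_eq_sum hzero]
  have hterm : ∀ a ∈ Finset.range (v + 2),
      (if E' + 1 ≤ a then cA n (p ^ a) else 0) / ((p : ℂ) ^ w) ^ a
        = (if E' + 1 ≤ a then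
            ((if a ≤ v then y ^ a else 0) - (if a - 1 ≤ v then x * y ^ (a - 1) else 0)) else 0) := by
    intro a _
    by_cases ha : E' + 1 ≤ a
    · rw [if_pos ha, if_pos ha, cA_prime_pow n p hp a (by omega)]
      rw [if_congr (hp.pow_dvd_iff_le_factorization hn) rfl rfl,
        if_congr (hp.pow_dvd_iff_le_factorization hn) rfl rfl]
      rw [div_eq_mul_inv, ← inv_pow, hxinv]
      rw [sub_mul, ite_mul, ite_mul, zero_mul]
      congr 1
      · rcases le_or_gt a v with h | h
        · rw [if_pos h, if_pos h, hyx, mul_pow]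
        · rw [if_neg (by omega), if_neg (by omega)]
      · rcases le_or_gt (a - 1) v with h | h
        · rw [if_pos h, if_pos h]
          have hxa : x ^ a = x ^ (a - 1) * x := by
            have h1 : a - 1 + 1 = a := by omega
            rw [← h1, pow_succ]
            congr 1 <;> omega
          rw [hxa, hyx, mul_pow]
          ring
        · rw [if_neg (by omega), if_neg (by omega)]
    · rw [if_neg ha, if_neg ha, zero_div]
  rw [Finset.sum_congr rfl hterm, block_sum y x hy1 E' v]
  have hxy : x = y * (p : ℂ)⁻¹ := by
    rw [hyx]
    field_simp
  by_cases hEV : E' + 1 ≤ v + 1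
  · rw [if_pos hEV, if_pos hEV]
    have hnum : (1 - x) * y ^ (v + 1) - y ^ (E' + 1) + x * y ^ E'
        = (1 - y * (p : ℂ)⁻¹) * y ^ (v + 1) - (1 - (p : ℂ)⁻¹) * y ^ (E' + 1) := by
      rw [hxy, pow_succ]
      ring
    rw [hnum]
  · rw [if_neg hEV, if_neg hEV]

/-- `Σ_{d ∣ n, (d,Q)=1} d^{1-w}` as a finite Euler product. -/
lemma LSeries_f1'_eval (n Q : ℕ) (hn : n ≠ 0) {w : ℂ} (hw : 1 < w.re) :
    LSeries (fun m => f1' n Q m) w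
      = ∏ p ∈ n.primeFactors.filter (fun p => ¬ p ∣ Q),
          (((p : ℂ) ^ ((1 : ℂ) - w)) ^ (n.factorization p + 1) - 1) / ((p : ℂ) ^ ((1 : ℂ) - w) - 1) := by
  classical
  -- the auxiliary multiplicative function
  set Fd : ArithmeticFunction ℂ :=
    ⟨fun d => if d ∣ n ∧ d.Coprime Q ∧ d ≠ 0 then (d : ℂ) ^ ((1 : ℂ) - w) else 0, by
      rw [if_neg (by simp)]⟩ with hFd
  have hFd_apply : ∀ d, Fd d = if d ∣ n ∧ d.Coprime Q ∧ d ≠ 0 then (d : ℂ) ^ ((1 : ℂ) - w) else 0 :=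
    fun d => rfl
  have hFd_mult : Fd.IsMultiplicative := by
    constructor
    · rw [hFd_apply, if_pos ⟨one_dvd n, Nat.coprime_one_left Q, one_ne_zero⟩, Nat.cast_one,
        Complex.one_cpow]
    · intro d e hde
      simp only [hFd_apply]
      by_cases hd : d ∣ n ∧ d.Coprime Q ∧ d ≠ 0
      · by_cases he : e ∣ n ∧ e.Coprime Q ∧ e ≠ 0
        · rw [if_pos ⟨hde.mul_dvd_of_dvd_of_dvd hd.1 he.1, Nat.Coprime.mul hd.2.1 he.2.1,
            mul_ne_zero hd.2.2 he.2.2⟩, if_pos hd, if_pos he]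
          have hcast : ((d * e : ℕ) : ℂ) = (((d : ℕ) : ℝ) : ℂ) * (((e : ℕ) : ℝ) : ℂ) := by
            push_cast; ring
          rw [hcast, Complex.mul_cpow_ofReal_nonneg (by positivity) (by positivity)]
          simp only [Complex.ofReal_natCast]
        · rw [if_neg (fun hc => he ⟨(dvd_mul_left e d).trans hc.1,
            Nat.Coprime.coprime_dvd_left (dvd_mul_left e d) hc.2.1,
            fun h0 => hc.2.2 (by simp [h0])⟩), if_pos hd, if_neg he, mul_zero]
      · rw [if_neg (fun hc => hd ⟨(dvd_mul_right d e).trans hc.1,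
          Nat.Coprime.coprime_dvd_left (dvd_mul_right d e) hc.2.1,
          fun h0 => hc.2.2 (by simp [h0])⟩), if_neg hd, zero_mul]
  -- step 1 : the L-series is a finite sum over divisors of n
  have hstep1 : LSeries (fun m => f1' n Q m) w = ∑ d ∈ n.divisors, Fd d := by
    rw [LSeries, tsum_eq_sum (s := n.divisors) (fun m hm => ?_)]
    · refine Finset.sum_congr rfl (fun d hd => ?_)
      obtain ⟨hdn, -⟩ := Nat.mem_divisors.mp hd
      have hd0 : d ≠ 0 := fun h0 => hn (by simpa [h0] using hdn)
      have hd0C : (d : ℂ) ≠ 0 := Nat.cast_ne_zero.mpr hd0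
      rw [LSeries.term_of_ne_zero hd0, f1'_apply, hFd_apply]
      by_cases hc : d.Coprime Q
      · rw [if_pos ⟨hdn, hc, hd0⟩, if_pos ⟨hdn, hc, hd0⟩]
        rw [sub_eq_add_neg, Complex.cpow_add _ _ hd0C, Complex.cpow_one, Complex.cpow_neg]
        field_simp
      · rw [if_neg (fun hcc => hc hcc.2.1), if_neg (fun hcc => hc hcc.2.1), zero_div]
    · by_cases hm0 : m = 0
      · rw [hm0, LSeries.term_zero]
      · have hmn : ¬ m ∣ n := fun hc => hm (Nat.mem_divisors.mpr ⟨hc, hn⟩)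
        rw [LSeries.term_of_ne_zero hm0, f1'_apply, if_neg (fun hc => hmn hc.1), zero_div]
  rw [hstep1, ← coe_mul_zeta_apply,
    (hFd_mult.mul (isMultiplicative_zeta.natCast)).multiplicative_factorization _ hn]
  rw [Finsupp.prod]
  rw [show n.factorization.support = n.primeFactors from Nat.support_factorization n]
  rw [← Finset.prod_filter_mul_prod_filter_not n.primeFactors (fun p => ¬ p ∣ Q)]
  have hone : ∀ p ∈ n.primeFactors.filter (fun p => ¬ ¬ p ∣ Q),
      (Fd * ↑(zeta : ArithmeticFunction ℕ)) (p ^ n.factorization p) = 1 := by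
    intro p hp'
    obtain ⟨hpn, hpQ⟩ := Finset.mem_filter.mp hp'
    have hp := Nat.prime_of_mem_primeFactors hpn
    have hpQ' : p ∣ Q := not_not.mp hpQ
    rw [coe_mul_zeta_apply, Nat.sum_divisors_prime_pow hp]
    rw [Finset.sum_eq_single 0]
    · rw [pow_zero, hFd_mult.map_one]
    · intro j hj hj0
      have : ¬ (p ^ j).Coprime Q := fun hc =>
        (hp.coprime_iff_not_dvd.mp
          (Nat.Coprime.coprime_dvd_left (dvd_pow_self p hj0) hc)) hpQ'
      rw [hFd_apply, if_neg (fun hc => this hc.2.1)]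
    · intro h0
      exact absurd (Finset.mem_range.mpr (Nat.succ_pos _)) h0
  rw [Finset.prod_congr rfl hone, Finset.prod_const_one, mul_one]
  refine Finset.prod_congr rfl (fun p hp' => ?_)
  obtain ⟨hpn, hpQ⟩ := Finset.mem_filter.mp hp'
  have hp := Nat.prime_of_mem_primeFactors hpn
  have hcop : p.Coprime Q := hp.coprime_iff_not_dvd.mpr hpQ
  rw [coe_mul_zeta_apply, Nat.sum_divisors_prime_pow hp]
  have hterm : ∀ j ∈ Finset.range (n.factorization p + 1),
      Fd (p ^ j) = ((p : ℂ) ^ ((1 : ℂ) - w)) ^ j := by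
    intro j hj
    have hj' : j ≤ n.factorization p := Nat.lt_succ_iff.mp (Finset.mem_range.mp hj)
    rw [hFd_apply, if_pos ⟨(hp.pow_dvd_iff_le_factorization hn).mpr hj',
      Nat.Coprime.pow_left _ hcop, pow_ne_zero j hp.ne_zero⟩, natCast_pow_cpow]
  rw [Finset.sum_congr rfl hterm, geom_sum_eq (y_ne_one p hp hw)]

lemma cond_iff (n Q : ℕ) (hn : n ≠ 0) (hQ : Q ≠ 0) :
    (Q / ∏ p ∈ Q.primeFactors, p) ∣ n
      ↔ ∀ p ∈ Q.primeFactors, Q.factorization p ≤ n.factorization p + 1 := by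
  set R := ∏ p ∈ Q.primeFactors, p with hR
  have hRdvd : R ∣ Q := Nat.prod_primeFactors_dvd Q
  have hR0 : 0 < R := Finset.prod_pos (fun p hp => (Nat.prime_of_mem_primeFactors hp).pos)
  have hQR0 : Q / R ≠ 0 := by
    rw [Nat.div_ne_zero_iff, and_iff_right hR0.ne']
    exact Nat.le_of_dvd (Nat.pos_of_ne_zero hQ) hRdvd
  rw [← Nat.factorization_le_iff_dvd hQR0 hn, Finsupp.le_def]
  have hRfact : ∀ p, R.factorization p = if p ∈ Q.primeFactors then 1 else 0 := by
    intro p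
    rw [hR, Nat.factorization_prod (fun q hq => (Nat.prime_of_mem_primeFactors hq).ne_zero)]
    rw [Finsupp.finset_sum_apply]
    have hsingle : ∀ q ∈ Q.primeFactors, (q.factorization) p = if q = p then 1 else 0 := by
      intro q hq
      rw [(Nat.prime_of_mem_primeFactors hq).factorization, Finsupp.single_apply]
    rw [Finset.sum_congr rfl hsingle]
    exact Finset.sum_ite_eq' Q.primeFactors p (fun _ => 1)
  have hdivfact : ∀ p, (Q / R).factorization p = Q.factorization p - R.factorization p := by
    intro p
    rw [Nat.factorization_div hRdvd]
    exact Finsupp.tsub_apply _ _ p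
  constructor
  · intro h p hp
    have := h p
    rw [hdivfact, hRfact, if_pos hp] at this
    omega
  · intro h p
    rw [hdivfact, hRfact]
    by_cases hp : p ∈ Q.primeFactors
    · rw [if_pos hp]
      have := h p hp
      omega
    · rw [if_neg hp]
      have : Q.factorization p = 0 := by
        rw [← Nat.support_factorization] at hp
        exact Finsupp.notMem_support_iff.mp hp
      omega


end RS

/-- `ζ^{(M)}(s)`: the Riemann zeta function with Euler factors at primes dividing `M` removed. -/
noncomputable def zetaRemoved (M : ℕ) (s : ℂ) : ℂ :=
  riemannZeta s * ∏ p ∈ M.primeFactors, (1 - (p : ℂ) ^ (-s))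

/-- The modified divisor sum `σ_s(n; M)`. -/
noncomputable def sigmaMod (s : ℂ) (n M : ℕ) : ℂ :=
  if (M / ∏ p ∈ M.primeFactors, p) ∣ n then
    (∏ p ∈ n.primeFactors.filter (fun p => ¬ p ∣ M),
        (((p : ℂ) ^ (((n.factorization p : ℂ) + 1) * s) - 1) / ((p : ℂ) ^ s - 1))) *
    (∏ p ∈ M.primeFactors,
        (((1 - (p : ℂ) ^ (s - 1)) * (p : ℂ) ^ (((n.factorization p : ℂ) + 1) * s)
            - (1 - (p : ℂ)⁻¹) * (p : ℂ) ^ ((M.factorization p : ℂ) * s)) / ((p : ℂ) ^ s - 1)))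
  else 0

namespace RS

lemma star_identity (n Q : ℕ) (hn : n ≠ 0) (hQ : Q ≠ 0) {w : ℂ} (hw : 1 < w.re) :
    sigmaMod (1 - w) n Q
      = (∏ p ∈ Q.primeFactors, LSeries (fun m => ellp n (Q.factorization p) p m) w)
        * LSeries (fun m => f1' n Q m) w := by
  rw [sigmaMod]
  by_cases hcond : (Q / ∏ p ∈ Q.primeFactors, p) ∣ n
  · rw [if_pos hcond]
    have hle := (cond_iff n Q hn hQ).mp hcond
    rw [LSeries_f1'_eval n Q hn hw, mul_comm]
    congr 1
    · refine Finset.prod_congr rfl (fun p hp' => ?_)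
      have hp := Nat.prime_of_mem_primeFactors hp'
      have hp0 : (p : ℂ) ≠ 0 := Nat.cast_ne_zero.mpr hp.ne_zero
      have he1 : 1 ≤ Q.factorization p :=
        hp.factorization_pos_of_dvd hQ (Nat.mem_primeFactors.mp hp').2.1
      obtain ⟨E', hE'⟩ : ∃ E', Q.factorization p = E' + 1 :=
        ⟨Q.factorization p - 1, by omega⟩
      rw [hE', Lellp_closed n p hp hn E' hw, if_pos (by rw [← hE']; exact hle p hp')]
      have hc1 : ((n.factorization p : ℂ) + 1) * ((1 : ℂ) - w)
          = ((n.factorization p + 1 : ℕ) : ℂ) * ((1 : ℂ) - w) := by push_cast; ring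
      rw [hc1, Complex.cpow_nat_mul, Complex.cpow_nat_mul]
      have hc3 : (p : ℂ) ^ ((1 : ℂ) - w - 1) = (p : ℂ) ^ ((1 : ℂ) - w) * (p : ℂ)⁻¹ := by
        rw [sub_eq_add_neg ((1 : ℂ) - w) 1, Complex.cpow_add _ _ hp0, Complex.cpow_neg_one]
      rw [hc3]
    · refine Finset.prod_congr rfl (fun p hp' => ?_)
      have hc1 : ((n.factorization p : ℂ) + 1) * ((1 : ℂ) - w)
          = ((n.factorization p + 1 : ℕ) : ℂ) * ((1 : ℂ) - w) := by push_cast; ring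
      rw [hc1, Complex.cpow_nat_mul]
  · rw [if_neg hcond]
    rw [cond_iff n Q hn hQ] at hcond
    push_neg at hcond
    obtain ⟨p0, hp0Q, hgt⟩ := hcond
    symm
    rw [mul_eq_zero]
    left
    apply Finset.prod_eq_zero hp0Q
    have hp := Nat.prime_of_mem_primeFactors hp0Q
    have he1 : 1 ≤ Q.factorization p0 :=
      hp.factorization_pos_of_dvd hQ (Nat.mem_primeFactors.mp hp0Q).2.1
    obtain ⟨E', hE'⟩ : ∃ E', Q.factorization p0 = E' + 1 :=
      ⟨Q.factorization p0 - 1, by omega⟩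
    rw [hE', Lellp_closed n p0 hp hn E' hw, if_neg (by omega)]

lemma zeta_side (Q : ℕ) (hQ : Q ≠ 0) {w : ℂ} (hw : 1 < w.re) :
    LSeries (fun m => mu' Q m) w * zetaRemoved Q w = 1 ∧ zetaRemoved Q w ≠ 0 := by
  have h1 := LSeries_mu'_riemann Q hQ hw
  have hne : ∀ p ∈ Q.primeFactors, (1 - (p : ℂ) ^ (-w)) ≠ 0 := by
    intro p hp
    exact sub_ne_zero.mpr (Ne.symm (x_ne_one p (Nat.prime_of_mem_primeFactors hp) hw))
  have hmain : LSeries (fun m => mu' Q m) w * zetaRemoved Q w = 1 := by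
    rw [zetaRemoved, ← mul_assoc, h1, ← Finset.prod_mul_distrib]
    rw [Finset.prod_congr rfl (fun p hp => inv_mul_cancel₀ (hne p hp))]
    exact Finset.prod_const_one
  exact ⟨hmain, fun h0 => one_ne_zero (by rw [h0, mul_zero] at hmain; exact hmain.symm)⟩

end RS

/-- For `n, N` positive and `Re(s) > 1`,
`Σ_{q ≥ 1, 4N | q} r(n;q)/q^{2s} = σ_{1-2s}(n;4N)/ζ^{(4N)}(2s)`. -/
theorem sum_of_ramanujan_sums (n N : ℕ) (hn : 0 < n) (hN : 0 < N) (s : ℂ) (hs : 1 < s.re) :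
    ∑' k : ℕ+, ramanujanSum n (4 * N * k) / ((4 * N * k : ℕ) : ℂ) ^ (2 * s)
      = sigmaMod (1 - 2 * s) n (4 * N) / zetaRemoved (4 * N) (2 * s) := by
  have hn0 : n ≠ 0 := hn.ne'
  set Q := 4 * N with hQdef
  have hQ0 : Q ≠ 0 := by
    rw [hQdef]
    exact Nat.mul_ne_zero (by norm_num) hN.ne'
  set w := 2 * s with hwdef
  have hw : 1 < w.re := by
    have hre : w.re = 2 * s.re := by
      rw [hwdef]
      simp [Complex.mul_re]
    rw [hre]
    linarith
  have hLHS : (∑' k : ℕ+, ramanujanSum n (Q * (k : ℕ)) / ((Q * (k : ℕ) : ℕ) : ℂ) ^ w)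
      = LSeries (fun m => RS.gA n Q m) w := by
    rw [LSeries, ← Function.Injective.tsum_eq (g := fun k : ℕ+ => Q * (k : ℕ)) ?hinj ?hsupp]
    · apply tsum_congr
      intro k
      have hk0 : Q * (k : ℕ) ≠ 0 := Nat.mul_ne_zero hQ0 k.pos.ne'
      rw [LSeries.term_of_ne_zero hk0, RS.gA_apply,
        if_pos (show Q ∣ Q * (k : ℕ) from ⟨(k : ℕ), rfl⟩),
        ← RS.ramanujanSum_eq_cA n _ hk0]
    case hinj =>
      intro a b hab
      have := Nat.eq_of_mul_eq_mul_left (Nat.pos_of_ne_zero hQ0) hab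
      exact PNat.coe_injective this
    case hsupp =>
      intro m hm
      have hm0 : m ≠ 0 := by
        rintro rfl
        exact hm (LSeries.term_zero _ _)
      have hQm : Q ∣ m := by
        by_contra hc
        apply hm
        rw [LSeries.term_of_ne_zero hm0, RS.gA_apply, if_neg hc, zero_div]
      obtain ⟨k, rfl⟩ := hQm
      have hk0 : 0 < k := Nat.pos_of_ne_zero (fun h => hm0 (by simp [h]))
      exact ⟨⟨k, hk0⟩, rfl⟩
  rw [hLHS]
  have hgA : LSeries (fun m => RS.gA n Q m) w
      = sigmaMod (1 - w) n Q * LSeries (fun m => RS.mu' Q m) w := by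
    rw [← RS.hS_top n Q hQ0, RS.LSeries_hS n Q hn0 hw Q.primeFactors (le_refl _),
      RS.hS_empty_eq n Q hQ0,
      ArithmeticFunction.LSeries_mul' (RS.summable_f1' n Q hn0 hw) (RS.summable_mu' Q hw),
      RS.star_identity n Q hn0 hQ0 hw]
    ring
  obtain ⟨hone, hzne⟩ := RS.zeta_side Q hQ0 hw
  rw [hgA, eq_div_iff hzne, mul_assoc, hone, mul_one]
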